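/- Let $k$ be a global function field of characteristic $p$, and let $k_v$ be the completion of $k$ at a place $v$. If $a \in k^\times$ satisfies $a = b^p$ for some $b \in k_v^\times$, then $b \in k^\times$. -/

import Mathlib

/-!
Let `π` be a uniformizer at `v`. It is not a `p`-th power in `k`, and `[k : k^p] = p`: this
degree is unchanged by finite extensions and equals `p` for `𝔽_q(X)`, because `𝔽_q` is perfect.
Hence `k = k^p(π)` and `a = ∑_{i<p} x_iᵖ πⁱ` with `x_i ∈ k`. In `k_v` this gives
`(b - x₀)ᵖ = ∑_{0<i<p} x_iᵖ πⁱ`. The nonzero terms on the right have valuations `≡ -i (mod p)`,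
pairwise distinct, so the valuation of the sum is that of one of them and is not divisible by `p`,
unlike that of a `p`-th power. So all `x_i` with `i > 0` vanish and `b = x₀`.
-/

open IsDedekindDomain Polynomial Module IntermediateField WithZero

theorem minpoly_eq_X_pow_sub_C_of_pow_eq {F E : Type*} [Field F] [Field E] [Algebra F E]
    {p : ℕ} (hp : p.Prime) [ExpChar E p] {x : E} {y : F} (hy : algebraMap F E y = x ^ p)
    (hx : x ∉ (algebraMap F E).range) : minpoly F x = X ^ p - C y := by
  have hirr : Irreducible (X ^ p - C y) := by
    refine X_pow_sub_C_irreducible_of_prime hp fun b hb => hx ⟨b, ?_⟩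
    exact frobenius_inj E p (by simp only [frobenius_def, ← map_pow, hb, hy])
  exact (minpoly.eq_of_irreducible_of_monic hirr (by simp [hy])
    (monic_X_pow_sub_C y hp.ne_zero)).symm

theorem isIntegral_frobenius_fieldRange {E : Type*} [Field E] (p : ℕ) [ExpChar E p] (x : E) :
    IsIntegral (frobenius E p).fieldRange x :=
  ⟨X ^ p - C ⟨x ^ p, x, frobenius_def p x⟩, monic_X_pow_sub_C _ (expChar_pos E p).ne',
    by rw [← aeval_def, map_sub, aeval_X_pow, aeval_C, sub_eq_zero]; rfl⟩

theorem finrank_adjoin_frobenius_fieldRange {E : Type*} [Field E] {p : ℕ} (hp : p.Prime)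
    [ExpChar E p] {x : E} (hx : ∀ y : E, y ^ p ≠ x) :
    finrank (frobenius E p).fieldRange (frobenius E p).fieldRange⟮x⟯ = p := by
  have hmin := minpoly_eq_X_pow_sub_C_of_pow_eq hp (F := (frobenius E p).fieldRange)
    (y := ⟨x ^ p, x, frobenius_def p x⟩) rfl (by rintro ⟨⟨_, y, rfl⟩, h⟩; exact hx y h)
  rw [adjoin.finrank (isIntegral_frobenius_fieldRange p x), hmin, natDegree_X_pow_sub_C]

theorem exists_eq_sum_pow_mul_pow {K : Type*} [Field K] {p : ℕ} (hp : p.Prime) [ExpChar K p]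
    (hK : finrank (frobenius K p).fieldRange K = p) {π : K} (hπ : ∀ y : K, y ^ p ≠ π) (a : K) :
    ∃ x : ℕ → K, a = ∑ i ∈ Finset.range p, x i ^ p * π ^ i := by
  set Kp := (frobenius K p).fieldRange
  have hint := isIntegral_frobenius_fieldRange p π
  have htop : Kp⟮π⟯ = ⊤ := by
    have : FiniteDimensional Kp K := Module.finite_of_finrank_pos (hK ▸ hp.pos)
    refine eq_of_le_of_finrank_eq le_top ?_
    rw [finrank_top', hK, finrank_adjoin_frobenius_fieldRange hp hπ]
  let pb := adjoin.powerBasis hint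
  have hdim : pb.dim = p := by
    rw [← pb.finrank]; exact finrank_adjoin_frobenius_fieldRange hp hπ
  obtain ⟨f, hdeg, hf⟩ := pb.exists_eq_aeval ⟨a, htop ▸ mem_top⟩
  have ha : a = aeval π f := by
    simpa [pb] using congrArg (algebraMap Kp⟮π⟯ K) hf
  choose x hx using fun i => (f.coeff i).2
  refine ⟨x, ?_⟩
  rw [ha, aeval_eq_sum_range' (hdim ▸ hdeg)]
  refine Finset.sum_congr rfl fun i _ => ?_
  change (f.coeff i : K) * π ^ i = _
  rw [← hx, frobenius_def]

theorem finrank_frobenius_fieldRange_eq {K L : Type*} [Field K] [Field L] [Algebra K L]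
    (p : ℕ) [ExpChar K p] [ExpChar L p] [FiniteDimensional K L] :
    finrank (frobenius K p).fieldRange K = finrank (frobenius L p).fieldRange L := by
  set Kp := (frobenius K p).fieldRange
  let Lp : IntermediateField Kp L := (frobenius L p).fieldRange.toIntermediateField <| by
    rintro ⟨_, x, rfl⟩
    exact ⟨algebraMap K L x, (map_pow _ _ _).symm⟩
  have hfrob : finrank Kp Lp = finrank K L := by
    refine (congrArg Cardinal.toNat (Algebra.rank_eq_of_equiv_equiv
      (frobenius K p).rangeRestrictFieldEquiv
      (show L ≃+* Lp from (frobenius L p).rangeRestrictFieldEquiv) ?_)).symm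
    ext x
    exact map_pow (algebraMap K L) x p
  -- `[L : K^p]`, computed through `K` and through `L^p`
  have := (finrank_mul_finrank Kp K L).trans (finrank_mul_finrank Kp Lp L).symm
  rw [hfrob, mul_comm] at this
  exact Nat.eq_of_mul_eq_mul_left finrank_pos this

namespace Valuation

variable {K : Type*} [Field K] (v : Valuation K ℤᵐ⁰) {π : K} (hπ : v π = exp (-1)) (p : ℕ)
include hπ

theorem cast_log_map_pow_mul_pow {y : K} (hy : y ≠ 0) (i : ℕ) :
    ((log (v (y ^ p * π ^ i)) : ℤ) : ZMod p) = -i := by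
  have hπ0 : v π ≠ 0 := by simp [hπ]
  rw [map_mul, map_pow, map_pow, log_mul (pow_ne_zero _ (v.ne_zero_iff.mpr hy))
    (pow_ne_zero _ hπ0), log_pow, log_pow, hπ, log_exp]
  simp

theorem eq_of_map_pow_mul_pow_eq {y z : K} (hy : y ≠ 0) (hz : z ≠ 0) {i j : ℕ} (hi : i < p)
    (hj : j < p) (h : v (y ^ p * π ^ i) = v (z ^ p * π ^ j)) : i = j := by
  have := congrArg (fun t => ((log t : ℤ) : ZMod p)) h
  simp only [v.cast_log_map_pow_mul_pow hπ p hy, v.cast_log_map_pow_mul_pow hπ p hz,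
    neg_inj, ZMod.natCast_eq_natCast_iff'] at this
  rwa [Nat.mod_eq_of_lt hi, Nat.mod_eq_of_lt hj] at this

theorem pow_ne_of_map_eq_exp_neg_one (hp : 1 < p) (y : K) : y ^ p ≠ π := by
  intro h
  have hy : y ≠ 0 := by
    rintro rfl
    rw [zero_pow (by omega)] at h
    exact v.ne_zero_iff.mp (hπ ▸ exp_ne_zero) h.symm
  have := v.eq_of_map_pow_mul_pow_eq hπ p (i := 0) (j := 1) hy one_ne_zero (by omega) hp
    (by rw [pow_zero, mul_one, one_pow, one_mul, pow_one, h])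
  omega

theorem eq_zero_of_pow_eq_sum {c : K} {y : ℕ → K}
    (h : c ^ p = ∑ i ∈ Finset.Ico 1 p, y i ^ p * π ^ i) :
    ∀ i ∈ Finset.Ico 1 p, y i = 0 := by
  classical
  have hπ0 : π ≠ 0 := v.ne_zero_iff.mp (hπ ▸ exp_ne_zero)
  set f := fun i => y i ^ p * π ^ i
  set S := (Finset.Ico 1 p).filter (fun i => f i ≠ 0)
  by_contra! hne
  obtain ⟨i₁, hi₁, hy₁⟩ := hne
  have hS : S.Nonempty := ⟨i₁, by simp [S, f, hi₁, hy₁, hπ0]⟩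
  have hyS : ∀ i ∈ S, y i ≠ 0 ∧ 1 ≤ i ∧ i < p := by
    intro i hi
    simp only [S, f, Finset.mem_filter, Finset.mem_Ico] at hi
    exact ⟨fun h0 => hi.2 (by simp [h0, zero_pow (by omega : p ≠ 0)]), hi.1⟩
  obtain ⟨i₀, hi₀, hmax⟩ := S.exists_max_image (fun i => v (f i)) hS
  obtain ⟨hy₀, hi₀1, hi₀p⟩ := hyS i₀ hi₀
  have hv : v (c ^ p) = v (f i₀) := by
    rw [h, ← Finset.sum_filter_ne_zero]
    refine v.map_sum_eq_of_lt hi₀ fun i hi => ?_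
    obtain ⟨hiS, hii₀⟩ := Finset.mem_sdiff.mp hi
    refine (hmax i hiS).lt_of_ne fun heq => Finset.notMem_singleton.mp hii₀ ?_
    exact v.eq_of_map_pow_mul_pow_eq hπ p (hyS i hiS).1 hy₀ (hyS i hiS).2.2 hi₀p heq
  have hc : c ≠ 0 := by
    rintro rfl
    rw [zero_pow (by omega : p ≠ 0), map_zero, eq_comm, map_eq_zero] at hv
    exact Finset.mem_filter.mp hi₀ |>.2 hv
  have := v.eq_of_map_pow_mul_pow_eq hπ p (i := 0) hc hy₀ (by omega) hi₀p
    (by rw [pow_zero, mul_one]; exact hv)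
  omega

end Valuation

theorem RatFunc.finrank_frobenius_fieldRange (K : Type*) [Field K] {p : ℕ} (hp : p.Prime)
    [ExpChar K p] [PerfectRing K p] :
    finrank (frobenius (RatFunc K) p).fieldRange (RatFunc K) = p := by
  set F := (frobenius (RatFunc K) p).fieldRange
  have hX : ∀ r : RatFunc K, r ^ p ≠ X :=
    (Polynomial.idealX K).valuation _ |>.pow_ne_of_map_eq_exp_neg_one
      (Polynomial.valuation_X_eq_neg_one K) p hp.one_lt
  have hpoly : ∀ P : K[X], algebraMap K[X] (RatFunc K) P ∈ F⟮(X : RatFunc K)⟯ := by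
    intro P
    induction P using Polynomial.induction_on' with
    | add P Q hP hQ => rw [map_add]; exact add_mem hP hQ
    | monomial n c =>
      obtain ⟨d, rfl⟩ := surjective_frobenius K p c
      rw [← C_mul_X_pow_eq_monomial, map_mul, map_pow, RatFunc.algebraMap_X]
      refine mul_mem ?_ (pow_mem (mem_adjoin_simple_self F _) n)
      have hF : algebraMap K[X] (RatFunc K) (Polynomial.C (frobenius K p d)) ∈ F :=
        ⟨algebraMap K[X] (RatFunc K) (Polynomial.C d), by simp [frobenius_def]⟩
      exact IntermediateField.algebraMap_mem F⟮(X : RatFunc K)⟯ (⟨_, hF⟩ : F)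
  have htop : F⟮(X : RatFunc K)⟯ = ⊤ := by
    refine eq_top_iff.mpr fun r _ => ?_
    rw [← RatFunc.num_div_denom r]
    exact div_mem (hpoly _) (hpoly _)
  rw [← finrank_top', ← htop, finrank_adjoin_frobenius_fieldRange hp hX]

theorem FunctionField.finrank_frobenius_fieldRange (p : ℕ) [Fact p.Prime] (Fq k : Type*)
    [Field Fq] [Finite Fq] [Field k] [Algebra (RatFunc Fq) k] [FunctionField Fq k] [CharP k p] :
    finrank (frobenius k p).fieldRange k = p := by
  have : CharP (RatFunc Fq) p := (algebraMap _ k).charP (algebraMap (RatFunc Fq) k).injective p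
  have : CharP Fq p :=
    (algebraMap Fq (RatFunc Fq)).charP (algebraMap Fq (RatFunc Fq)).injective p
  rw [← finrank_frobenius_fieldRange_eq (K := RatFunc Fq) p,
    RatFunc.finrank_frobenius_fieldRange Fq Fact.out]

theorem stmt_0_general (p : ℕ) [Fact p.Prime] (Fq k : Type*) [Field Fq] [Finite Fq] [Field k]
    [Algebra (RatFunc Fq) k] [FunctionField Fq k] [CharP k p]
    (R : Type*) [CommRing R] [IsDedekindDomain R] [Algebra R k] [IsFractionRing R k]
    (v : HeightOneSpectrum R)
    (a : k) (b : v.adicCompletion k)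
    (hab : b ^ p = algebraMap k (v.adicCompletion k) a) :
    ∃ c : k, algebraMap k (v.adicCompletion k) c = b := by
  have hp : p.Prime := Fact.out
  obtain ⟨π, hπ⟩ := v.valuation_exists_uniformizer k
  obtain ⟨x, hx⟩ := exists_eq_sum_pow_mul_pow hp
    (FunctionField.finrank_frobenius_fieldRange p Fq k)
    ((v.valuation k).pow_ne_of_map_eq_exp_neg_one hπ p hp.one_lt) a
  set ι := algebraMap k (v.adicCompletion k)
  have : CharP (v.adicCompletion k) p := charP_of_injective_algebraMap ι.injective p
  have hπ' : Valued.v (ι π) = exp (-1) := (v.valuedAdicCompletion_eq_valuation' π).trans hπ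
  have hsum : (b - ι (x 0)) ^ p = ∑ i ∈ Finset.Ico 1 p, ι (x i) ^ p * ι π ^ i := by
    rw [sub_pow_expChar, hab, hx, map_sum, Finset.range_eq_Ico,
      Finset.sum_eq_sum_Ico_succ_bot hp.pos]
    simp
  have hzero := Valued.v.eq_zero_of_pow_eq_sum hπ' p hsum
  refine ⟨x 0, (sub_eq_zero.mp ?_).symm⟩
  rw [← pow_eq_zero_iff hp.ne_zero, hsum]
  exact Finset.sum_eq_zero fun i hi => by simp [hzero i hi, hp.ne_zero]

/-- Let `k` be a global function field of characteristic `p` and let `k_v` be the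
completion of `k` at a place `v` (a height-one prime of the ring of `S`-integers `R`, whose
fraction field is `k`).  If `a ∈ k^×` satisfies `a = b^p` for some `b ∈ k_v^×`, then `b`
already lies in `k`. -/
theorem stmt_0 (p : ℕ) [Fact p.Prime] (Fq k : Type*) [Field Fq] [Finite Fq] [Field k]
    [Algebra (RatFunc Fq) k] [FunctionField Fq k] [CharP k p]
    (R : Type*) [CommRing R] [IsDedekindDomain R] [Algebra R k] [IsFractionRing R k]
    (v : HeightOneSpectrum R)
    (a : k) (ha : a ≠ 0) (b : v.adicCompletion k) (hb : b ≠ 0)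
    (hab : b ^ p = algebraMap k (v.adicCompletion k) a) :
    ∃ c : k, algebraMap k (v.adicCompletion k) c = b :=
  stmt_0_general p Fq k R v a b hab
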